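/- For every even n ≥ 0, the Φ-generalized powers are Φ-symmetric conjugate under permutation of arguments: X̃^(n)(x₀,x) = X^(n)(x,x₀). -/

import Mathlib

noncomputable def genX (Φ : ℝ → ℂ) : ℕ → ℝ → ℝ → ℂ
  | 0 => fun _ _ => 1
  | n + 1 => fun x₀ x =>
      (n + 1 : ℕ) * ∫ ξ in x₀..x, genX Φ n x₀ ξ * Φ ξ ^ ((-1 : ℤ) ^ (n + 1))

noncomputable def genXt (Φ : ℝ → ℂ) : ℕ → ℝ → ℝ → ℂ
  | 0 => fun _ _ => 1
  | n + 1 => fun x₀ x =>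
      (n + 1 : ℕ) * ∫ ξ in x₀..x, genXt Φ n x₀ ξ * Φ ξ ^ (-((-1 : ℤ) ^ (n + 1)))

/-!
Since `Φ ^ (-k) = Φ⁻¹ ^ k`, the conjugate powers are `genXt Φ = genX Φ⁻¹`. The recursion defining
`genX` integrates out the last variable of an iterated integral over `x ≤ ξ₁ ≤ ⋯ ≤ ξₙ ≤ y`; Fubini
on the triangle `x ≤ t ≤ ξ ≤ y` lets one integrate out the first one instead:
`X⁽ⁿ⁺¹⁾(x, y) = (n + 1) ∫ₓʸ Φ(t)⁻¹ X̃⁽ⁿ⁾(t, y) dt`. Matching this against the defining recursion of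
`X̃⁽ⁿ⁺¹⁾(y, x)` gives, by induction, `genX Φ⁻¹ n x y = (-1)ⁿ genX (Φ ^ (-1)ⁿ) n y x`, which is the
claim for even `n`. Fubini needs continuity on all of `ℝ`, so `Φ` is first extended from `[a, b]`
by `projIcc`; the powers only see `Φ` between their endpoints.
-/

open MeasureTheory Set intervalIntegral

section IteratedIntegral

variable {E : Type*} [NormedAddCommGroup E] [NormedSpace ℝ E]

theorem integral_integral_triangle_swap_of_le {f : ℝ → ℝ → E} (hf : Continuous (Function.uncurry f))
    {x y : ℝ} (hxy : x ≤ y) :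
    ∫ ξ in x..y, ∫ t in x..ξ, f t ξ = ∫ t in x..y, ∫ ξ in t..y, f t ξ := by
  set μ := volume.restrict (Ioc x y)
  set F : ℝ → ℝ → E := fun t ξ => (Ici t).indicator (f t) ξ
  have hF : Integrable (Function.uncurry F) (μ.prod μ) := by
    have hf' : IntegrableOn (Function.uncurry f) (Icc x y ×ˢ Icc x y) (volume.prod volume) := by
      rw [← Measure.volume_eq_prod]
      exact hf.continuousOn.integrableOn_compact (isCompact_Icc.prod isCompact_Icc)
    have hind : Function.uncurry F = {p : ℝ × ℝ | p.1 ≤ p.2}.indicator (Function.uncurry f) := by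
      ext ⟨t, ξ⟩; simp [F, indicator_apply]
    rw [Measure.prod_restrict, hind]
    exact (hf'.mono_set (prod_mono Ioc_subset_Icc_self Ioc_subset_Icc_self)).indicator
      (measurableSet_le measurable_fst measurable_snd)
  calc ∫ ξ in x..y, ∫ t in x..ξ, f t ξ = ∫ ξ, ∫ t, F t ξ ∂μ ∂μ := by
        rw [integral_of_le hxy]
        refine setIntegral_congr_fun measurableSet_Ioc fun ξ hξ => ?_
        have hFξ : (fun t => F t ξ) = (Iic ξ).indicator (fun t => f t ξ) := by
          ext t; simp [F, indicator_apply]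
        rw [hFξ, MeasureTheory.integral_indicator measurableSet_Iic,
          Measure.restrict_restrict measurableSet_Iic,
          Iic_inter_Ioc_of_le hξ.2, integral_of_le hξ.1.le]
    _ = ∫ t, ∫ ξ, F t ξ ∂μ ∂μ := (integral_integral_swap hF).symm
    _ = ∫ t in x..y, ∫ ξ in t..y, f t ξ := by
        rw [integral_of_le hxy]
        refine setIntegral_congr_fun measurableSet_Ioc fun t ht => ?_
        have hset : Ici t ∩ Ioc x y = Icc t y := by
          ext ξ; simp only [mem_inter_iff, mem_Ici, mem_Ioc, mem_Icc]
          exact ⟨fun h => ⟨h.1, h.2.2⟩, fun h => ⟨h.1, ht.1.trans_le h.1, h.2⟩⟩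
        rw [MeasureTheory.integral_indicator measurableSet_Ici,
          Measure.restrict_restrict measurableSet_Ici, hset, integral_of_le ht.2, integral_Icc_eq_integral_Ioc]

theorem integral_integral_triangle_swap {f : ℝ → ℝ → E} (hf : Continuous (Function.uncurry f))
    (x y : ℝ) : ∫ ξ in x..y, ∫ t in x..ξ, f t ξ = ∫ t in x..y, ∫ ξ in t..y, f t ξ := by
  rcases le_total x y with hxy | hyx
  · exact integral_integral_triangle_swap_of_le hf hxy
  · have hf' : Continuous (Function.uncurry fun t ξ => f ξ t) := hf.comp continuous_swap
    calc ∫ ξ in x..y, ∫ t in x..ξ, f t ξ = ∫ ξ in y..x, ∫ t in ξ..x, f t ξ := by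
          rw [integral_symm y x, ← intervalIntegral.integral_neg]
          exact integral_congr fun ξ _ => by rw [integral_symm ξ x, neg_neg]
      _ = ∫ t in y..x, ∫ ξ in y..t, f t ξ := (integral_integral_triangle_swap_of_le hf' hyx).symm
      _ = ∫ t in x..y, ∫ ξ in t..y, f t ξ := by
          rw [integral_symm x y, ← intervalIntegral.integral_neg]
          exact integral_congr fun t _ => by rw [integral_symm t y, neg_neg]

theorem continuous_intervalIntegral_fst_snd {g : ℝ → ℝ → E} (hg : Continuous (Function.uncurry g)) :
    Continuous fun p : ℝ × ℝ => ∫ ξ in p.1..p.2, g p.1 ξ := by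
  have hg' : Continuous (Function.uncurry fun (p : ℝ × ℝ) ξ => g p.1 ξ) :=
    hg.comp (continuous_fst.fst.prodMk continuous_snd)
  have hprim (s : ℝ × ℝ → ℝ) (hs : Continuous s) :
      Continuous fun p => ∫ ξ in (0 : ℝ)..s p, g p.1 ξ :=
    continuous_parametric_intervalIntegral_of_continuous hg' hs
  refine ((hprim _ continuous_snd).sub (hprim _ continuous_fst)).congr fun p => ?_
  have hgp : Continuous (g p.1) := hg.comp (continuous_const.prodMk continuous_id)
  exact integral_interval_sub_left (hgp.intervalIntegrable _ _) (hgp.intervalIntegrable _ _)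

end IteratedIntegral

section GeneralizedPowers

variable {Φ : ℝ → ℂ}

theorem genX_succ (n : ℕ) (x₀ x : ℝ) :
    genX Φ (n + 1) x₀ x =
      (n + 1 : ℕ) * ∫ ξ in x₀..x, genX Φ n x₀ ξ * Φ ξ ^ ((-1 : ℤ) ^ (n + 1)) :=
  rfl

theorem genXt_eq_genX_inv : genXt Φ = genX Φ⁻¹ := by
  ext n x₀ x
  induction n generalizing x with
  | zero => rfl
  | succ n ih => simp only [genXt, genX, ih, Pi.inv_apply, inv_zpow']

theorem genX_congr {Ψ : ℝ → ℂ} {s : Set ℝ} (hs : s.OrdConnected) (h : EqOn Φ Ψ s) (n : ℕ)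
    {x₀ x : ℝ} (hx₀ : x₀ ∈ s) (hx : x ∈ s) : genX Φ n x₀ x = genX Ψ n x₀ x := by
  induction n generalizing x with
  | zero => rfl
  | succ n ih =>
    rw [genX_succ, genX_succ]
    congr 1
    refine integral_congr fun ξ hξ => ?_
    have hξs := hs.uIcc_subset hx₀ hx hξ
    rw [ih hξs, h hξs]

theorem continuous_uncurry_genX (hc : Continuous Φ) (h0 : ∀ t, Φ t ≠ 0) (n : ℕ) :
    Continuous (Function.uncurry (genX Φ n)) := by
  induction n with
  | zero => exact continuous_const
  | succ n ih =>
    have hpow : Continuous fun ξ => Φ ξ ^ ((-1 : ℤ) ^ (n + 1)) :=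
      hc.zpow₀ _ fun t => Or.inl (h0 t)
    exact continuous_const.mul <| continuous_intervalIntegral_fst_snd
      (g := fun x₀ ξ => genX Φ n x₀ ξ * Φ ξ ^ ((-1 : ℤ) ^ (n + 1)))
      (ih.mul (hpow.comp continuous_snd))

theorem genX_succ_eq_integral_inv_mul_genX_inv (hc : Continuous Φ) (h0 : ∀ t, Φ t ≠ 0)
    (n : ℕ) (x y : ℝ) :
    genX Φ (n + 1) x y = (n + 1 : ℕ) * ∫ t in x..y, (Φ t)⁻¹ * genX Φ⁻¹ n t y := by
  induction n generalizing y with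
  | zero => simp [genX]
  | succ n ih =>
    set F : ℝ → ℝ → ℂ := fun t ξ => (Φ t)⁻¹ * genX Φ⁻¹ n t ξ * Φ ξ ^ ((-1 : ℤ) ^ (n + 1 + 1))
    have hF : Continuous (Function.uncurry F) :=
      (((hc.inv₀ h0).comp continuous_fst).mul (continuous_uncurry_genX (hc.inv₀ h0)
        (fun t => inv_ne_zero (h0 t)) n)).mul
        ((hc.zpow₀ _ fun t => Or.inl (h0 t)).comp continuous_snd)
    have hexp (ξ : ℝ) : Φ⁻¹ ξ ^ ((-1 : ℤ) ^ (n + 1)) = Φ ξ ^ ((-1 : ℤ) ^ (n + 1 + 1)) := by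
      rw [Pi.inv_apply, inv_zpow', pow_succ (-1 : ℤ) (n + 1), mul_neg_one]
    calc genX Φ (n + 1 + 1) x y
        = (n + 1 + 1 : ℕ) * ((n + 1 : ℕ) * ∫ ξ in x..y, ∫ t in x..ξ, F t ξ) := by
          rw [genX_succ]
          congr 1
          rw [← intervalIntegral.integral_const_mul]
          refine integral_congr fun ξ _ => ?_
          rw [ih, mul_assoc, ← intervalIntegral.integral_mul_const]
      _ = (n + 1 + 1 : ℕ) * ((n + 1 : ℕ) * ∫ t in x..y, ∫ ξ in t..y, F t ξ) := by
          rw [integral_integral_triangle_swap hF]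
      _ = (n + 1 + 1 : ℕ) * ∫ t in x..y, (Φ t)⁻¹ * genX Φ⁻¹ (n + 1) t y := by
          rw [← intervalIntegral.integral_const_mul]
          congr 1
          refine integral_congr fun t _ => ?_
          simp only [genX_succ, hexp, F, mul_assoc, intervalIntegral.integral_const_mul]
          ring

theorem genX_inv_eq_neg_one_pow_mul_genX_swap (hc : Continuous Φ) (h0 : ∀ t, Φ t ≠ 0)
    (n : ℕ) (x y : ℝ) : genX Φ⁻¹ n x y = (-1) ^ n * genX (Φ ^ (-1 : ℤ) ^ n) n y x := by
  induction n generalizing y with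
  | zero => simp [genX]
  | succ n ih =>
    set Ψ : ℝ → ℂ := Φ ^ (-1 : ℤ) ^ (n + 1)
    have hΨc : Continuous Ψ := hc.zpow₀ _ fun t => Or.inl (h0 t)
    have hΨ0 (t : ℝ) : Ψ t ≠ 0 := zpow_ne_zero _ (h0 t)
    have hΨinv : Ψ⁻¹ = Φ ^ (-1 : ℤ) ^ n := by rw [← zpow_neg, pow_succ, mul_neg_one, neg_neg]
    calc genX Φ⁻¹ (n + 1) x y
        = (n + 1 : ℕ) * ∫ ξ in x..y, (-1) ^ n * ((Ψ ξ)⁻¹ * genX Ψ⁻¹ n ξ x) := by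
          rw [genX_succ]
          congr 1
          refine integral_congr fun ξ _ => ?_
          rw [ih, hΨinv]
          simp only [Ψ, Pi.inv_apply, Pi.pow_apply, inv_zpow', pow_succ, mul_neg_one, zpow_neg,
            inv_inv]
          ring
      _ = (-1) ^ (n + 1) * genX Ψ (n + 1) y x := by
          rw [genX_succ_eq_integral_inv_mul_genX_inv hΨc hΨ0, integral_symm x y,
            intervalIntegral.integral_const_mul]
          ring

end GeneralizedPowers

theorem stmt_1 (a b : ℝ) (Φ : ℝ → ℂ) (hΦc : ContinuousOn Φ (Set.Icc a b))
    (hΦ0 : ∀ y ∈ Set.Icc a b, Φ y ≠ 0) (x₀ x : ℝ)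
    (hx₀ : x₀ ∈ Set.Icc a b) (hx : x ∈ Set.Icc a b) (n : ℕ) (hn : Even n) :
    genXt Φ n x₀ x = genX Φ n x x₀ := by
  have hab : a ≤ b := hx₀.1.trans hx₀.2
  set Ψ : ℝ → ℂ := fun t => Φ (projIcc a b hab t)
  have hΨc : Continuous Ψ := hΦc.comp_continuous (continuous_subtype_val.comp continuous_projIcc)
    fun t => (projIcc a b hab t).2
  have hΨ0 (t : ℝ) : Ψ t ≠ 0 := hΦ0 _ (projIcc a b hab t).2
  have hΨΦ : EqOn Ψ Φ (Icc a b) := fun t ht => by simp only [Ψ, projIcc_of_mem hab ht]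
  calc genXt Φ n x₀ x = genX Φ⁻¹ n x₀ x := by rw [genXt_eq_genX_inv]
    _ = genX Ψ⁻¹ n x₀ x :=
      genX_congr ordConnected_Icc (fun t ht => by simp only [Pi.inv_apply, hΨΦ ht]) n hx₀ hx
    _ = genX Ψ n x x₀ := by
      rw [genX_inv_eq_neg_one_pow_mul_genX_swap hΨc hΨ0, hn.neg_one_pow, hn.neg_one_pow, zpow_one,
        one_mul]
    _ = genX Φ n x x₀ := genX_congr ordConnected_Icc hΨΦ n hx hx₀
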